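/- arXiv:math/9405213 — 2 statements merged into one kernel-verified Lean document; each statement's English description precedes it below -/
import Mathlib

section
/- Let μ be a positive Borel measure on ℝ with infinite support and finite moments of all orders, let (p_n)_{n≥0} be polynomials with real coefficients satisfying ∫_ℝ p_n(x) p_m(x) dμ(x) = ζ_n δ_{m,n} with ζ_n > 0, let (c_n) be nonzero complex numbers, and let ρ ∈ (0,∞] be the radius of convergence of the power series Σ_{n=0}^∞ (√ζ_n / c_n) z^n. Then: (a) there is a μ-null set N ⊆ ℝ such that for every x ∈ ℝ \ N and every t with |t| < ρ the series Σ_{n=0}^∞ p_n(x) t^n / c_n converges absolutely; (b) for each t with |t| < ρ the series converges in L²(μ) to a function G(·,t); and (c) for all t₁, t₂ with |t₁|, |t₂| < ρ one has ∫_ℝ G(x,t₁) G(x,t₂) dμ(x) = Σ_{n=0}^∞ ζ_n (t₁ t₂)^n / c_n². -/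
open MeasureTheory Complex Filter Finset
open scoped ENNReal NNReal Topology

/-!
For `‖t‖ < ρ` the terms `gₙ = pₙ tⁿ / cₙ` have `L²(μ)`-norms `√ζₙ ‖t‖ⁿ / ‖cₙ‖`, which are summable.
By Cauchy–Schwarz the majorant `∑ ‖gₙ‖` is then square integrable, hence finite almost everywhere.
It dominates every partial sum, so dominated convergence gives the `L²` convergence and, together
with the orthogonality relations for the partial sums, the Parseval identity. The exceptional null
set is made independent of `t` by taking the union over the countably many rational radii below `ρ`.
-/

section
variable {α : Type*} [MeasurableSpace α] {μ : Measure α}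

lemma lintegral_mul_le_of_lintegral_sq_le {f g : α → ℝ≥0∞} (hf : AEMeasurable f μ)
    (hg : AEMeasurable g μ) {a b : ℝ≥0∞} (ha : ∫⁻ x, f x ^ 2 ∂μ ≤ a ^ 2)
    (hb : ∫⁻ x, g x ^ 2 ∂μ ≤ b ^ 2) : ∫⁻ x, f x * g x ∂μ ≤ a * b := by
  have hsqrt : ∀ {h : α → ℝ≥0∞} {c : ℝ≥0∞}, ∫⁻ x, h x ^ 2 ∂μ ≤ c ^ 2 →
      (∫⁻ x, h x ^ (2 : ℝ) ∂μ) ^ (1 / 2 : ℝ) ≤ c := fun {h c} hc => by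
    simp only [ENNReal.rpow_two]
    have := ENNReal.rpow_le_rpow hc (by norm_num : (0 : ℝ) ≤ ((2 : ℕ) : ℝ)⁻¹)
    rwa [ENNReal.pow_rpow_inv_natCast two_ne_zero, Nat.cast_ofNat, ← one_div] at this
  calc ∫⁻ x, f x * g x ∂μ
      ≤ (∫⁻ x, f x ^ (2 : ℝ) ∂μ) ^ (1 / 2 : ℝ) * (∫⁻ x, g x ^ (2 : ℝ) ∂μ) ^ (1 / 2 : ℝ) :=
        ENNReal.lintegral_mul_le_Lp_mul_Lq μ .two_two hf hg
    _ ≤ a * b := by gcongr <;> exact hsqrt ‹_›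

lemma lintegral_tsum_sq_le {F : ℕ → α → ℝ≥0∞} (hF : ∀ n, AEMeasurable (F n) μ)
    {w : ℕ → ℝ≥0∞} (hw : ∀ n, ∫⁻ x, F n x ^ 2 ∂μ ≤ w n ^ 2) :
    ∫⁻ x, (∑' n, F n x) ^ 2 ∂μ ≤ (∑' n, w n) ^ 2 := by
  simp only [sq, ← ENNReal.tsum_mul_right, ← ENNReal.tsum_mul_left]
  rw [lintegral_tsum (f := fun n x => ∑' m, F m x * F n x)
    fun n => AEMeasurable.tsum fun m => (hF m).mul (hF n)]
  refine ENNReal.tsum_le_tsum fun n => ?_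
  rw [lintegral_tsum (f := fun m x => F m x * F n x) fun m => (hF m).mul (hF n)]
  exact ENNReal.tsum_le_tsum fun m =>
    lintegral_mul_le_of_lintegral_sq_le (hF m) (hF n) (sq (w m) ▸ hw m) (sq (w n) ▸ hw n)

lemma lintegral_enorm_ofReal_mul_sq {f : α → ℝ} {ζ : ℝ} (hf : Integrable (fun x => f x * f x) μ)
    (hζ : ∫ x, f x * f x ∂μ = ζ) (a : ℂ) :
    ∫⁻ x, ‖(f x : ℂ) * a‖ₑ ^ 2 ∂μ = ‖(Real.sqrt ζ : ℂ) * a‖ₑ ^ 2 := by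
  have h_enorm_sq : ∀ r : ℝ, ‖(r : ℂ)‖ₑ ^ 2 = ENNReal.ofReal (r * r) := fun r => by
    rw [← ofReal_norm, norm_real, ← ENNReal.ofReal_pow (norm_nonneg _), Real.norm_eq_abs, sq_abs,
      sq]
  have hζ_nonneg : 0 ≤ ζ := hζ ▸ integral_nonneg fun x => mul_self_nonneg (f x)
  simp only [enorm_mul, mul_pow, h_enorm_sq]
  rw [lintegral_mul_const' _ _ (by simp), Real.mul_self_sqrt hζ_nonneg, ← hζ,
    ofReal_integral_eq_lintegral_ofReal hf (ae_of_all _ fun x => mul_self_nonneg _)]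
end

section
variable {α E : Type*} [MeasurableSpace α] {μ : Measure α} [NormedAddCommGroup E]
  {g : ℕ → α → E}

lemma lintegral_tsum_enorm_sq_ne_top (hg : ∀ n, AEStronglyMeasurable (g n) μ) {w : ℕ → ℝ≥0∞}
    (hw : ∀ n, ∫⁻ x, ‖g n x‖ₑ ^ 2 ∂μ ≤ w n ^ 2) (hw_top : ∑' n, w n ≠ ∞) :
    ∫⁻ x, (∑' n, ‖g n x‖ₑ) ^ 2 ∂μ ≠ ∞ :=
  ((lintegral_tsum_sq_le (fun n => (hg n).enorm) hw).trans_lt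
    (ENNReal.pow_lt_top hw_top.lt_top)).ne

lemma ae_summable_norm_of_lintegral_sq_le (hg : ∀ n, AEStronglyMeasurable (g n) μ)
    {w : ℕ → ℝ≥0∞} (hw : ∀ n, ∫⁻ x, ‖g n x‖ₑ ^ 2 ∂μ ≤ w n ^ 2) (hw_top : ∑' n, w n ≠ ∞) :
    ∀ᵐ x ∂μ, Summable fun n => ‖g n x‖ := by
  filter_upwards [ae_lt_top' ((AEMeasurable.tsum fun n => (hg n).enorm).pow_const 2)
    (lintegral_tsum_enorm_sq_ne_top hg hw hw_top)] with x hx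
  exact tsum_enorm_ne_top_iff_summable_norm.1 (ENNReal.pow_lt_top_iff.1 hx |>.resolve_right
    two_ne_zero).ne

lemma integrable_tsum_norm_sq_of_lintegral_sq_le (hg : ∀ n, AEStronglyMeasurable (g n) μ)
    {w : ℕ → ℝ≥0∞} (hw : ∀ n, ∫⁻ x, ‖g n x‖ₑ ^ 2 ∂μ ≤ w n ^ 2) (hw_top : ∑' n, w n ≠ ∞) :
    Integrable (fun x => (∑' n, ‖g n x‖) ^ 2) μ := by
  have h_toReal : ∀ x, (∑' n, ‖g n x‖) ^ 2 = ((∑' n, ‖g n x‖ₑ) ^ 2).toReal := fun x => by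
    simp [ENNReal.toReal_pow, ENNReal.tsum_toReal_eq fun _ => enorm_ne_top]
  simp only [h_toReal]
  exact integrable_toReal_of_lintegral_ne_top
    ((AEMeasurable.tsum fun n => (hg n).enorm).pow_const 2)
    (lintegral_tsum_enorm_sq_ne_top hg hw hw_top)

lemma norm_sum_range_le_tsum_norm {f : ℕ → E} (hf : Summable fun n => ‖f n‖) (M : ℕ) :
    ‖∑ n ∈ range M, f n‖ ≤ ∑' n, ‖f n‖ :=
  (norm_sum_le _ _).trans (hf.sum_le_tsum _ fun _ _ => norm_nonneg _)

variable [CompleteSpace E]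

lemma aestronglyMeasurable_tsum_of_summable_norm (hg : ∀ n, AEStronglyMeasurable (g n) μ)
    (hsum : ∀ᵐ x ∂μ, Summable fun n => ‖g n x‖) :
    AEStronglyMeasurable (fun x => ∑' n, g n x) μ :=
  aestronglyMeasurable_of_tendsto_ae atTop
    (fun M => Finset.aestronglyMeasurable_fun_sum (range M) fun n _ => hg n)
    (hsum.mono fun x hx => by simpa using hx.of_norm.hasSum.tendsto_sum_nat)

theorem tendsto_integral_norm_sum_range_sub_tsum_sq (hg : ∀ n, AEStronglyMeasurable (g n) μ)
    (hsum : ∀ᵐ x ∂μ, Summable fun n => ‖g n x‖)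
    (hint : Integrable (fun x => (∑' n, ‖g n x‖) ^ 2) μ) :
    Tendsto (fun M => ∫ x, ‖∑ n ∈ range M, g n x - ∑' n, g n x‖ ^ 2 ∂μ) atTop (𝓝 0) := by
  have hlim := tendsto_integral_of_dominated_convergence (fun x => 4 * (∑' n, ‖g n x‖) ^ 2)
    (F := fun M x => ‖∑ n ∈ range M, g n x - ∑' n, g n x‖ ^ 2) (f := fun _ => 0)
    (fun M => ((Finset.aestronglyMeasurable_fun_sum (range M) fun n _ => hg n).sub
      (aestronglyMeasurable_tsum_of_summable_norm hg hsum)).norm.pow 2)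
    (hint.const_mul 4) (fun M => hsum.mono fun x hx => ?_) (hsum.mono fun x hx => ?_)
  · simpa using hlim
  · have h := norm_sub_le_of_le (norm_sum_range_le_tsum_norm hx M) (norm_tsum_le_tsum_norm hx)
    rw [Real.norm_of_nonneg (by positivity)]
    nlinarith [norm_nonneg (∑ n ∈ range M, g n x - ∑' n, g n x)]
  · simpa using ((hx.of_norm.hasSum.tendsto_sum_nat.sub_const (∑' n, g n x)).norm.pow 2)

theorem tendsto_integral_sum_range_mul_sum_range {R : Type*} [NormedRing R] [NormedSpace ℝ R]
    [CompleteSpace R] {g h : ℕ → α → R}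
    (hg : ∀ n, AEStronglyMeasurable (g n) μ) (hh : ∀ n, AEStronglyMeasurable (h n) μ)
    (hg_sum : ∀ᵐ x ∂μ, Summable fun n => ‖g n x‖) (hh_sum : ∀ᵐ x ∂μ, Summable fun n => ‖h n x‖)
    (hg_int : Integrable (fun x => (∑' n, ‖g n x‖) ^ 2) μ)
    (hh_int : Integrable (fun x => (∑' n, ‖h n x‖) ^ 2) μ) :
    Tendsto (fun M => ∫ x, (∑ n ∈ range M, g n x) * ∑ n ∈ range M, h n x ∂μ) atTop
      (𝓝 (∫ x, (∑' n, g n x) * ∑' n, h n x ∂μ)) := by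
  refine tendsto_integral_of_dominated_convergence
    (fun x => (∑' n, ‖g n x‖) ^ 2 + (∑' n, ‖h n x‖) ^ 2)
    (fun M => (Finset.aestronglyMeasurable_fun_sum (range M) fun n _ => hg n).mul
      (Finset.aestronglyMeasurable_fun_sum (range M) fun n _ => hh n))
    (hg_int.add hh_int) (fun M => ?_) ?_
  · filter_upwards [hg_sum, hh_sum] with x hgx hhx
    have h₁ := norm_sum_range_le_tsum_norm hgx M
    have h₂ := norm_sum_range_le_tsum_norm hhx M
    refine (norm_mul_le _ _).trans ?_
    nlinarith [norm_nonneg (∑ n ∈ range M, g n x), norm_nonneg (∑ n ∈ range M, h n x),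
      sq_nonneg (∑' n, ‖g n x‖ - ∑' n, ‖h n x‖)]
  · filter_upwards [hg_sum, hh_sum] with x hgx hhx
    exact hgx.of_norm.hasSum.tendsto_sum_nat.mul hhx.of_norm.hasSum.tendsto_sum_nat
end

section
variable {α : Type*} [MeasurableSpace α] {μ : Measure α}

lemma ae_forall_summable_norm_mul_pow {𝕜 : Type*} [RCLike 𝕜] {f : ℕ → α → 𝕜} {ρ : ℝ≥0∞}
    (h : ∀ t : 𝕜, ‖t‖ₑ < ρ → ∀ᵐ x ∂μ, Summable fun n => ‖f n x * t ^ n‖) :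
    ∀ᵐ x ∂μ, ∀ t : 𝕜, ‖t‖ₑ < ρ → Summable fun n => ‖f n x * t ^ n‖ := by
  have h_rat : ∀ᵐ x ∂μ, ∀ q : ℚ, ‖((q : ℝ) : 𝕜)‖ₑ < ρ →
      Summable fun n => ‖f n x * ((q : ℝ) : 𝕜) ^ n‖ := by
    refine ae_all_iff.2 fun q => ?_
    by_cases hq : ‖((q : ℝ) : 𝕜)‖ₑ < ρ
    · exact (h _ hq).mono fun x hx _ => hx
    · exact ae_of_all _ fun x hq' => absurd hq' hq
  filter_upwards [h_rat] with x hx t ht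
  obtain ⟨q, hq0, htq, hqρ⟩ := ENNReal.lt_iff_exists_rat_btwn.1 ht
  have h_norm_q : ‖((q : ℝ) : 𝕜)‖ₑ = Real.toNNReal q := by
    rw [← ofReal_norm, RCLike.norm_ofReal, abs_of_nonneg (Rat.cast_nonneg.2 hq0)]
    rfl
  rw [← h_norm_q] at htq hqρ
  have htq' : ‖t‖ ≤ ‖((q : ℝ) : 𝕜)‖ := by
    simpa [enorm_eq_nnnorm, ← NNReal.coe_le_coe] using htq.le
  refine (hx q hqρ).of_nonneg_of_le (fun n => norm_nonneg _) fun n => ?_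
  simp only [norm_mul, norm_pow]
  gcongr

lemma integral_sum_range_mul_sum_range_of_orthogonal {f : ℕ → α → ℝ} {ζ : ℕ → ℝ}
    (hint : ∀ m n, Integrable (fun x => f n x * f m x) μ)
    (horth : ∀ m n, ∫ x, f n x * f m x ∂μ = if m = n then ζ n else 0) (a b : ℕ → ℂ) (M : ℕ) :
    ∫ x, (∑ n ∈ range M, (f n x : ℂ) * a n) * ∑ n ∈ range M, (f n x : ℂ) * b n ∂μ
      = ∑ n ∈ range M, ζ n * (a n * b n) := by
  have h_expand : ∀ x, (∑ n ∈ range M, (f n x : ℂ) * a n) * ∑ n ∈ range M, (f n x : ℂ) * b n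
      = ∑ n ∈ range M, ∑ m ∈ range M, ((f n x * f m x : ℝ) : ℂ) * (a n * b m) := fun x => by
    rw [sum_mul_sum]
    refine sum_congr rfl fun n _ => sum_congr rfl fun m _ => ?_
    push_cast
    ring
  have h_int : ∀ n m, Integrable (fun x => ((f n x * f m x : ℝ) : ℂ) * (a n * b m)) μ :=
    fun n m => (hint m n).ofReal.mul_const _
  simp only [h_expand]
  rw [integral_finsetSum _ fun n _ => integrable_finsetSum _ fun m _ => h_int n m]
  refine sum_congr rfl fun n hn => ?_
  rw [integral_finsetSum _ fun m _ => h_int n m]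
  simp only [integral_mul_const, integral_complex_ofReal, horth]
  rw [sum_eq_single_of_mem n hn fun m _ hm => by simp [hm]]
  simp
end

lemma integrable_eval_of_integrable_pow {μ : Measure ℝ}
    (hmom : ∀ n : ℕ, Integrable (fun x : ℝ => x ^ n) μ) (q : Polynomial ℝ) :
    Integrable (fun x => q.eval x) μ := by
  simp only [Polynomial.eval_eq_sum_range]
  exact integrable_finsetSum _ fun i _ => (hmom i).const_mul _

lemma summable_diag_mul_of_summable_norm {R : Type*} [NormedRing R] [CompleteSpace R]
    {ι : Type*} {f g : ι → R} (hf : Summable fun n => ‖f n‖) (hg : Summable fun n => ‖g n‖) :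
    Summable fun n => f n * g n :=
  (summable_mul_of_summable_norm hf hg).comp_injective (i := fun n => (n, n))
    fun _ _ h => (Prod.mk.inj h).1

lemma summable_mul_mul_pow_div_sq {ζ : ℕ → ℝ} (hζ : ∀ n, 0 ≤ ζ n) {c : ℕ → ℂ} {t₁ t₂ : ℂ}
    (h₁ : Summable fun n => ‖(Real.sqrt (ζ n) : ℂ) / c n * t₁ ^ n‖)
    (h₂ : Summable fun n => ‖(Real.sqrt (ζ n) : ℂ) / c n * t₂ ^ n‖) :
    Summable fun n => (ζ n : ℂ) * (t₁ * t₂) ^ n / c n ^ 2 := by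
  refine (summable_diag_mul_of_summable_norm h₁ h₂).congr fun n => ?_
  have h_sqrt : ((Real.sqrt (ζ n) : ℝ) : ℂ) * (Real.sqrt (ζ n) : ℂ) = ζ n := by
    rw [← ofReal_mul, Real.mul_self_sqrt (hζ n)]
  rw [← h_sqrt]
  ring

theorem stmt0_general
    (μ : Measure ℝ)
    (hmom : ∀ n : ℕ, Integrable (fun x : ℝ => x ^ n) μ)
    (p : ℕ → Polynomial ℝ) (ζ : ℕ → ℝ)
    (horth : ∀ m n : ℕ,
      ∫ x, (p n).eval x * (p m).eval x ∂μ = if m = n then ζ n else 0)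
    (c : ℕ → ℂ)
    (ρ : ℝ≥0∞)
    (hρ1 : ∀ z : ℂ, (‖z‖₊ : ℝ≥0∞) < ρ →
      Summable (fun n : ℕ => ‖(Real.sqrt (ζ n) : ℂ) / c n * z ^ n‖)) :
    ∃ (N : Set ℝ) (G : ℝ → ℂ → ℂ), MeasurableSet N ∧ μ N = 0 ∧
      (∀ x : ℝ, x ∉ N → ∀ t : ℂ, (‖t‖₊ : ℝ≥0∞) < ρ →
        Summable (fun n : ℕ => ‖(((p n).eval x : ℝ) : ℂ) * t ^ n / c n‖)) ∧
      (∀ t : ℂ, (‖t‖₊ : ℝ≥0∞) < ρ →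
        Tendsto (fun M : ℕ =>
            ∫ x, ‖(∑ n ∈ Finset.range M, (((p n).eval x : ℝ) : ℂ) * t ^ n / c n) - G x t‖ ^ 2 ∂μ)
          atTop (nhds 0)) ∧
      (∀ t₁ t₂ : ℂ, (‖t₁‖₊ : ℝ≥0∞) < ρ → (‖t₂‖₊ : ℝ≥0∞) < ρ →
        ∫ x, G x t₁ * G x t₂ ∂μ = ∑' n : ℕ, (ζ n : ℂ) * (t₁ * t₂) ^ n / (c n) ^ 2) := by
  set g : ℂ → ℕ → ℝ → ℂ := fun t n x => (((p n).eval x : ℝ) : ℂ) * t ^ n / c n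
  have hint : ∀ m n, Integrable (fun x => (p n).eval x * (p m).eval x) μ := fun m n => by
    simpa using integrable_eval_of_integrable_pow hmom (p n * p m)
  have hζ : ∀ n, 0 ≤ ζ n := fun n => by
    simpa [horth] using (integral_nonneg fun x => mul_self_nonneg _ :
      0 ≤ ∫ x, (p n).eval x * (p n).eval x ∂μ)
  have hg_meas : ∀ t n, AEStronglyMeasurable (g t n) μ := fun t n => by
    simp only [g]
    fun_prop
  have hg_sq : ∀ t n,
      ∫⁻ x, ‖g t n x‖ₑ ^ 2 ∂μ ≤ ‖(Real.sqrt (ζ n) : ℂ) / c n * t ^ n‖ₑ ^ 2 := fun t n => by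
    simpa only [g, mul_div_assoc, div_mul_eq_mul_div] using
      (lintegral_enorm_ofReal_mul_sq (hint n n) (by simpa using horth n n) (t ^ n / c n)).le
  have hw : ∀ t : ℂ, (‖t‖₊ : ℝ≥0∞) < ρ →
      ∑' n, ‖(Real.sqrt (ζ n) : ℂ) / c n * t ^ n‖ₑ ≠ ∞ :=
    fun t ht => tsum_enorm_ne_top_iff_summable_norm.2 (hρ1 t ht)
  have hsum : ∀ t : ℂ, (‖t‖₊ : ℝ≥0∞) < ρ → ∀ᵐ x ∂μ, Summable fun n => ‖g t n x‖ :=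
    fun t ht => ae_summable_norm_of_lintegral_sq_le (hg_meas t) (hg_sq t) (hw t ht)
  have hsq_int : ∀ t : ℂ, (‖t‖₊ : ℝ≥0∞) < ρ → Integrable (fun x => (∑' n, ‖g t n x‖) ^ 2) μ :=
    fun t ht => integrable_tsum_norm_sq_of_lintegral_sq_le (hg_meas t) (hg_sq t) (hw t ht)
  obtain ⟨N, hN_sub, hN_meas, hN_null⟩ := exists_measurable_superset_of_null <| ae_iff.1 <|
    ae_forall_summable_norm_mul_pow fun t ht =>
      (hsum t ht).mono fun x hx => by simpa only [g, mul_div_right_comm] using hx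
  refine ⟨N, fun x t => ∑' n, g t n x, hN_meas, hN_null, fun x hx t ht => ?_,
    fun t ht => tendsto_integral_norm_sum_range_sub_tsum_sq (hg_meas t) (hsum t ht) (hsq_int t ht),
    fun t₁ t₂ ht₁ ht₂ => ?_⟩
  · simpa only [mul_div_right_comm] using not_not.1 (fun h => hx (hN_sub h)) t ht
  have h_partial : ∀ M, ∫ x, (∑ n ∈ range M, g t₁ n x) * ∑ n ∈ range M, g t₂ n x ∂μ
      = ∑ n ∈ range M, (ζ n : ℂ) * (t₁ * t₂) ^ n / c n ^ 2 := fun M => by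
    simp only [g, mul_div_assoc, integral_sum_range_mul_sum_range_of_orthogonal hint horth]
    exact sum_congr rfl fun n _ => by ring
  have h_summable := summable_mul_mul_pow_div_sq hζ (hρ1 t₁ ht₁) (hρ1 t₂ ht₂)
  have h_lim := tendsto_integral_sum_range_mul_sum_range (hg_meas t₁) (hg_meas t₂)
    (hsum t₁ ht₁) (hsum t₂ ht₂) (hsq_int t₁ ht₁) (hsq_int t₂ ht₂)
  simp only [h_partial] at h_lim
  exact tendsto_nhds_unique h_summable.hasSum.tendsto_sum_nat h_lim |>.symm

/-- Proposition 1.1 (i): orthogonal polynomials, generating function, absolute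
convergence a.e., `L²` convergence and the Parseval-type identity. -/
theorem stmt0
    (μ : Measure ℝ)
    (hmom : ∀ n : ℕ, Integrable (fun x : ℝ => x ^ n) μ)
    (hsupp : ∀ s : Set ℝ, s.Finite → μ sᶜ ≠ 0)
    (p : ℕ → Polynomial ℝ) (ζ : ℕ → ℝ) (hζ : ∀ n, 0 < ζ n)
    (horth : ∀ m n : ℕ,
      ∫ x, (p n).eval x * (p m).eval x ∂μ = if m = n then ζ n else 0)
    (c : ℕ → ℂ) (hc : ∀ n, c n ≠ 0)
    (ρ : ℝ≥0∞) (hρpos : 0 < ρ)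
    (hρ1 : ∀ z : ℂ, (‖z‖₊ : ℝ≥0∞) < ρ →
      Summable (fun n : ℕ => ‖(Real.sqrt (ζ n) : ℂ) / c n * z ^ n‖))
    (hρ2 : ∀ z : ℂ, ρ < (‖z‖₊ : ℝ≥0∞) →
      ¬ Summable (fun n : ℕ => ‖(Real.sqrt (ζ n) : ℂ) / c n * z ^ n‖)) :
    ∃ (N : Set ℝ) (G : ℝ → ℂ → ℂ), MeasurableSet N ∧ μ N = 0 ∧
      (∀ x : ℝ, x ∉ N → ∀ t : ℂ, (‖t‖₊ : ℝ≥0∞) < ρ →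
        Summable (fun n : ℕ => ‖(((p n).eval x : ℝ) : ℂ) * t ^ n / c n‖)) ∧
      (∀ t : ℂ, (‖t‖₊ : ℝ≥0∞) < ρ →
        Tendsto (fun M : ℕ =>
            ∫ x, ‖(∑ n ∈ Finset.range M, (((p n).eval x : ℝ) : ℂ) * t ^ n / c n) - G x t‖ ^ 2 ∂μ)
          atTop (nhds 0)) ∧
      (∀ t₁ t₂ : ℂ, (‖t₁‖₊ : ℝ≥0∞) < ρ → (‖t₂‖₊ : ℝ≥0∞) < ρ →
        ∫ x, G x t₁ * G x t₂ ∂μ = ∑' n : ℕ, (ζ n : ℂ) * (t₁ * t₂) ^ n / (c n) ^ 2) :=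
  stmt0_general μ hmom p ζ horth c ρ hρ1
end

section
/- For 0 < q < 1, t₁, t₂ ∈ (−1,1) with t₁t₂ ≠ 0, every n ≥ 0 and every θ ∈ ℝ, one has Σ_{k=0}^n (q^{−n};q)_k (t₁e^{iθ};q)_k (t₁e^{−iθ};q)_k q^k / ((q;q)_k (t₁t₂;q)_k) = (t₁/t₂)^n Σ_{k=0}^n (q^{−n};q)_k (t₂e^{iθ};q)_k (t₂e^{−iθ};q)_k q^k / ((q;q)_k (t₁t₂;q)_k). -/
/-!
Write `φ_n(a, b)` for the `₃φ₂` on the left with `u = e^{iθ}`, so that the claim reads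
`b^n φ_n(a, b) = a^n φ_n(b, a)`. Two contiguous relations of the terminating
`₃φ₂(A, a, b; c, 0; q, q)`, one raising `A` to `qA` and one raising `c` to `qc`, express
`φ_{n+2}(a, b)` through `φ_{n+1}` and `φ_n` at parameters multiplied by `q`. Feeding in the
symmetry for `n` and `n + 1` at those parameters, all that is left is
`b (1 - ab - (1 - au)(1 - a/u)) = ab (u + 1/u - a - b)`, which is symmetric in `a` and `b`.
-/

open Complex Finset

noncomputable def qp (q a : ℂ) (n : ℕ) : ℂ := ∏ k ∈ Finset.range n, (1 - a * q ^ k)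

lemma qp_zero (q a : ℂ) : qp q a 0 = 1 := prod_range_zero _

lemma qp_succ (q a : ℂ) (k : ℕ) : qp q a (k + 1) = qp q a k * (1 - a * q ^ k) :=
  prod_range_succ _ _

lemma qp_succ' (q a : ℂ) (k : ℕ) : qp q a (k + 1) = (1 - a) * qp q (q * a) k := by
  rw [qp, prod_range_succ', pow_zero, mul_one, mul_comm]
  exact congrArg _ (prod_congr rfl fun j _ => by ring)

lemma qp_inv_pow_succ_eq_zero {q : ℂ} (hq : q ≠ 0) (n : ℕ) : qp q (q ^ n)⁻¹ (n + 1) = 0 :=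
  prod_eq_zero (self_mem_range_succ n) (by rw [inv_mul_cancel₀ (pow_ne_zero n hq), sub_self])

/-- The `k`-th term of `₃φ₂(A, a, b; c, 0; q, q)`. -/
noncomputable def phi32Term (q A a b c : ℂ) (k : ℕ) : ℂ :=
  qp q A k * qp q a k * qp q b k * q ^ k / (qp q q k * qp q c k)

noncomputable def phi32 (q A a b c : ℂ) (N : ℕ) : ℂ := ∑ k ∈ range N, phi32Term q A a b c k

lemma phi32Term_zero (q A a b c : ℂ) : phi32Term q A a b c 0 = 1 := by
  simp [phi32Term, qp_zero]

lemma phi32Term_contiguous_num {q : ℂ} (hq : ∀ j : ℕ, q * q ^ j ≠ 1) {c : ℂ} (hc : c ≠ 1)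
    (A a b : ℂ) (k : ℕ) :
    (1 - c) * (phi32Term q A a b c (k + 1) - phi32Term q (q * A) a b c (k + 1)) =
      -(q * A) * (1 - a) * (1 - b) * phi32Term q (q * A) (q * a) (q * b) (q * c) k := by
  have hqk : 1 - q * q ^ k ≠ 0 := sub_ne_zero.2 (hq k).symm
  simp only [phi32Term]
  rw [qp_succ' q A, qp_succ q (q * A), qp_succ' q a, qp_succ' q b, qp_succ q q, qp_succ' q c]
  field_simp
  ring

lemma phi32Term_contiguous_den {q : ℂ} (hq : ∀ j : ℕ, q * q ^ j ≠ 1) {c : ℂ}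
    (hc : ∀ j : ℕ, c * q ^ j ≠ 1) (A a b : ℂ) (k : ℕ) :
    (1 - c) * (1 - q * c) * (phi32Term q A a b c (k + 1) - phi32Term q A a b (q * c) (k + 1)) =
      q * c * (1 - A) * (1 - a) * (1 - b) *
        phi32Term q (q * A) (q * a) (q * b) (q * (q * c)) k := by
  have hc' : ∀ j : ℕ, q * c * q ^ j ≠ 1 := fun j h => hc (j + 1) (by rw [← h]; ring)
  have hc₀ : 1 - c ≠ 0 := sub_ne_zero.2 (by simpa using (hc 0).symm)
  have hqc : 1 - q * c ≠ 0 := sub_ne_zero.2 (by simpa using (hc' 0).symm)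
  have hqk : 1 - q * q ^ k ≠ 0 := sub_ne_zero.2 (hq k).symm
  -- `c * q` rather than `q * c`: the order `field_simp` normalizes to
  have hcqk : 1 - c * q * q ^ k ≠ 0 := sub_ne_zero.2 (by rw [mul_comm c]; exact (hc' k).symm)
  have hG : qp q (q * (q * c)) k = qp q (q * c) k * (1 - q * c * q ^ k) / (1 - q * c) := by
    rw [eq_div_iff hqc, ← qp_succ, qp_succ', mul_comm]
  simp only [phi32Term]
  rw [qp_succ' q A, qp_succ' q a, qp_succ' q b, qp_succ q q, qp_succ' q c, qp_succ q (q * c), hG]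
  field_simp
  ring

lemma phi32_contiguous_num {q : ℂ} (hq : ∀ j : ℕ, q * q ^ j ≠ 1) {c : ℂ} (hc : c ≠ 1)
    (A a b : ℂ) (N : ℕ) :
    (1 - c) * (phi32 q A a b c (N + 1) - phi32 q (q * A) a b c (N + 1)) =
      -(q * A) * (1 - a) * (1 - b) * phi32 q (q * A) (q * a) (q * b) (q * c) N := by
  simp only [phi32, sum_range_succ', phi32Term_zero, add_sub_add_right_eq_sub, ← sum_sub_distrib,
    mul_sum]
  exact sum_congr rfl fun k _ => phi32Term_contiguous_num hq hc A a b k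

lemma phi32_contiguous_den {q : ℂ} (hq : ∀ j : ℕ, q * q ^ j ≠ 1) {c : ℂ}
    (hc : ∀ j : ℕ, c * q ^ j ≠ 1) (A a b : ℂ) (N : ℕ) :
    (1 - c) * (1 - q * c) * (phi32 q A a b c (N + 1) - phi32 q A a b (q * c) (N + 1)) =
      q * c * (1 - A) * (1 - a) * (1 - b) * phi32 q (q * A) (q * a) (q * b) (q * (q * c)) N := by
  simp only [phi32, sum_range_succ', phi32Term_zero, add_sub_add_right_eq_sub, ← sum_sub_distrib,
    mul_sum]
  exact sum_congr rfl fun k _ => phi32Term_contiguous_den hq hc A a b k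

lemma phi32_inv_pow_succ_succ {q : ℂ} (hq : q ≠ 0) (a b c : ℂ) (n : ℕ) :
    phi32 q (q ^ n)⁻¹ a b c (n + 2) = phi32 q (q ^ n)⁻¹ a b c (n + 1) := by
  rw [phi32, sum_range_succ, phi32Term, qp_inv_pow_succ_eq_zero hq, zero_mul, zero_mul, zero_mul,
    zero_div, add_zero, phi32]

/-- `φ_n(a, b) = ₃φ₂(q^{-n}, au, a/u; ab, 0; q, q)`; `(ab; q)_n a^{-n} φ_n(a, b)` is the
Al-Salam–Chihara polynomial at `x = (u + u⁻¹) / 2`. -/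
noncomputable def ascPhi (q u a b : ℂ) (n : ℕ) : ℂ :=
  phi32 q (q ^ n)⁻¹ (a * u) (a * u⁻¹) (a * b) (n + 1)

lemma ascPhi_zero (q u a b : ℂ) : ascPhi q u a b 0 = 1 := by
  simp [ascPhi, phi32, phi32Term_zero]

lemma mul_inv_pow_succ {q : ℂ} (hq : q ≠ 0) (n : ℕ) : q * (q ^ (n + 1))⁻¹ = (q ^ n)⁻¹ := by
  rw [pow_succ', mul_inv, mul_inv_cancel_left₀ hq]

lemma ascPhi_succ {q : ℂ} (hq₀ : q ≠ 0) (hq : ∀ j : ℕ, q * q ^ j ≠ 1) {a b : ℂ} (hab : a * b ≠ 1)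
    (u : ℂ) (n : ℕ) :
    (1 - a * b) * ascPhi q u a b (n + 1) =
      (1 - a * b) * ascPhi q u a b n
        - (q ^ n)⁻¹ * ((1 - a * u) * (1 - a * u⁻¹)) * ascPhi q u (q * a) b n := by
  have h := phi32_contiguous_num hq hab (q ^ (n + 1))⁻¹ (a * u) (a * u⁻¹) (n + 1)
  rw [mul_inv_pow_succ hq₀, phi32_inv_pow_succ_succ hq₀] at h
  simp only [ascPhi, mul_assoc]
  linear_combination h

lemma ascPhi_succ_sub_qmul_right {q : ℂ} (hq₀ : q ≠ 0) (hq : ∀ j : ℕ, q * q ^ j ≠ 1) {a b : ℂ}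
    (hab : ∀ j : ℕ, a * b * q ^ j ≠ 1) (u : ℂ) (n : ℕ) :
    (1 - a * b) * (1 - q * (a * b)) * (ascPhi q u a b (n + 1) - ascPhi q u a (q * b) (n + 1)) =
      q * (a * b) * (1 - (q ^ (n + 1))⁻¹) * ((1 - a * u) * (1 - a * u⁻¹)) *
        ascPhi q u (q * a) (q * b) n := by
  have h := phi32_contiguous_den hq hab (q ^ (n + 1))⁻¹ (a * u) (a * u⁻¹) (n + 1)
  rw [mul_inv_pow_succ hq₀] at h
  simp only [ascPhi, mul_assoc, mul_left_comm _ q]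
  linear_combination h

lemma ascPhi_succ_of_symm {q : ℂ} (hq₀ : q ≠ 0) (hq : ∀ j : ℕ, q * q ^ j ≠ 1) {a b : ℂ}
    (hab : a * b ≠ 1) (u : ℂ) (N : ℕ)
    (h₁ : b ^ N * ascPhi q u a b N = a ^ N * ascPhi q u b a N)
    (h₂ : b ^ N * ascPhi q u (q * a) b N = (q * a) ^ N * ascPhi q u b (q * a) N) :
    (1 - a * b) * b ^ (N + 1) * ascPhi q u a b (N + 1) =
      a ^ N * b * ((1 - a * b) * ascPhi q u b a N
        - (1 - a * u) * (1 - a * u⁻¹) * ascPhi q u b (q * a) N) := by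
  have hqN : (q ^ N)⁻¹ * q ^ N = 1 := inv_mul_cancel₀ (pow_ne_zero N hq₀)
  linear_combination b ^ (N + 1) * ascPhi_succ hq₀ hq hab u N + b * (1 - a * b) * h₁
    - b * (q ^ N)⁻¹ * ((1 - a * u) * (1 - a * u⁻¹)) * h₂
    - a ^ N * b * (1 - a * u) * (1 - a * u⁻¹) * ascPhi q u b (q * a) N * hqN

lemma one_sub_mul_sub_eq_mul {u : ℂ} (hu : u ≠ 0) (a b : ℂ) :
    1 - a * b - (1 - a * u) * (1 - a * u⁻¹) = a * (u + u⁻¹ - a - b) := by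
  linear_combination (-a ^ 2) * mul_inv_cancel₀ hu

lemma ascPhi_succ_combination {q u : ℂ} (hq₀ : q ≠ 0) (hq : ∀ j : ℕ, q * q ^ j ≠ 1) (hu : u ≠ 0)
    {a b : ℂ} (hab : ∀ j : ℕ, a * b * q ^ j ≠ 1) (n : ℕ) :
    (1 - a * b) * (1 - q * (a * b)) * ((1 - a * b) * ascPhi q u b a (n + 1)
        - (1 - a * u) * (1 - a * u⁻¹) * ascPhi q u b (q * a) (n + 1)) =
      (1 - a * b) * (1 - q * (a * b)) * a * (u + u⁻¹ - a - b) * ascPhi q u b a (n + 1)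
        + q * (a * b) * (1 - (q ^ (n + 1))⁻¹) * ((1 - a * u) * (1 - a * u⁻¹))
          * ((1 - b * u) * (1 - b * u⁻¹)) * ascPhi q u (q * b) (q * a) n := by
  have hba : ∀ j : ℕ, b * a * q ^ j ≠ 1 := fun j => by rw [mul_comm b]; exact hab j
  have h := ascPhi_succ_sub_qmul_right hq₀ hq hba u n
  rw [mul_comm b a] at h
  linear_combination (1 - a * u) * (1 - a * u⁻¹) * h
    + (1 - a * b) * (1 - q * (a * b)) * ascPhi q u b a (n + 1) * one_sub_mul_sub_eq_mul hu a b

theorem ascPhi_symm {q u : ℂ} (hq₀ : q ≠ 0) (hq : ∀ j : ℕ, q * q ^ j ≠ 1) (hu : u ≠ 0) (n : ℕ) :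
    ∀ a b : ℂ, (∀ j : ℕ, a * b * q ^ j ≠ 1) →
      b ^ n * ascPhi q u a b n = a ^ n * ascPhi q u b a n := by
  induction n using Nat.twoStepInduction with
  | zero => simp [ascPhi_zero]
  | one =>
    intro a b hab
    have hab₀ : a * b ≠ 1 := by simpa using hab 0
    have hba₀ : b * a ≠ 1 := by rwa [mul_comm]
    have h := ascPhi_succ_of_symm hq₀ hq hab₀ u 0 (by simp [ascPhi_zero]) (by simp [ascPhi_zero])
    have h' := ascPhi_succ_of_symm hq₀ hq hba₀ u 0 (by simp [ascPhi_zero]) (by simp [ascPhi_zero])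
    simp only [ascPhi_zero, pow_zero, zero_add, pow_one, one_mul, mul_one] at h h'
    refine mul_left_cancel₀ (sub_ne_zero.2 hab₀.symm) ?_
    linear_combination
      h - h' + b * one_sub_mul_sub_eq_mul hu a b - a * one_sub_mul_sub_eq_mul hu b a
  | more n ih₀ ih₁ =>
    intro a b hab
    have hba : ∀ j : ℕ, b * a * q ^ j ≠ 1 := fun j => by rw [mul_comm b]; exact hab j
    have hshift : ∀ {c d : ℂ}, (∀ j : ℕ, c * d * q ^ j ≠ 1) → ∀ j : ℕ, q * c * d * q ^ j ≠ 1 :=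
      fun h j => by simpa [pow_succ, mul_comm, mul_left_comm, mul_assoc] using h (j + 1)
    have hsym₀ : b ^ n * ascPhi q u (q * a) (q * b) n = a ^ n * ascPhi q u (q * b) (q * a) n := by
      have h := ih₀ (q * a) (q * b) fun j => by
        simpa [pow_succ, mul_comm, mul_left_comm, mul_assoc] using hab (j + 2)
      rw [mul_pow, mul_pow, mul_assoc, mul_assoc] at h
      exact mul_left_cancel₀ (pow_ne_zero n hq₀) h
    have s₁ := ascPhi_succ_of_symm hq₀ hq (by simpa using hab 0) u (n + 1) (ih₁ a b hab)
      (ih₁ (q * a) b (hshift hab))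
    have s₂ := ascPhi_succ_of_symm hq₀ hq (by simpa using hba 0) u (n + 1) (ih₁ b a hba)
      (ih₁ (q * b) a (hshift hba))
    have c₁ := ascPhi_succ_combination hq₀ hq hu hab n
    have c₂ := ascPhi_succ_combination hq₀ hq hu hba n
    have hK : (1 - a * b) * (1 - a * b) * (1 - q * (a * b)) ≠ 0 := by
      have h0 : 1 - a * b ≠ 0 := sub_ne_zero.2 (by simpa using (hab 0).symm)
      have h1 : 1 - q * (a * b) ≠ 0 := sub_ne_zero.2 (by simpa [mul_comm] using (hab 1).symm)
      exact mul_ne_zero (mul_ne_zero h0 h0) h1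
    refine mul_left_cancel₀ hK ?_
    -- by `s₁, s₂, c₁, c₂`, the difference of the two sides is `ab (u + u⁻¹ - a - b)` times that
    -- of `ih₁ a b hab` plus a multiple of that of `hsym₀`
    linear_combination (1 - a * b) * (1 - q * (a * b)) * (s₁ - s₂) + a ^ (n + 1) * b * c₁
      - b ^ (n + 1) * a * c₂
      - (1 - a * b) * (1 - q * (a * b)) * a * b * (u + u⁻¹ - a - b) * ih₁ a b hab
      - q * (a * b) * (1 - (q ^ (n + 1))⁻¹) * ((1 - a * u) * (1 - a * u⁻¹))
          * ((1 - b * u) * (1 - b * u⁻¹)) * a * b * hsym₀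

lemma mul_pow_ne_one_of_norm_lt_one {c q : ℂ} (hc : ‖c‖ < 1) (hq : ‖q‖ ≤ 1) (j : ℕ) :
    c * q ^ j ≠ 1 := by
  intro h
  have hle : ‖c * q ^ j‖ ≤ ‖c‖ := by
    rw [norm_mul, norm_pow]
    exact mul_le_of_le_one_right (norm_nonneg c) (pow_le_one₀ (norm_nonneg q) hq)
  rw [h, norm_one] at hle
  exact hc.not_ge hle

/-- The symmetry of the Al-Salam--Chihara polynomials in `t₁, t₂`
(the `₃φ₂` transformation (2.11)). -/
theorem stmt4 (q t₁ t₂ : ℝ) (hq₁ : 0 < q) (hq₂ : q < 1)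
    (ht₁ : t₁ ∈ Set.Ioo (-1 : ℝ) 1) (ht₂ : t₂ ∈ Set.Ioo (-1 : ℝ) 1)
    (ht : t₁ * t₂ ≠ 0) (n : ℕ) (θ : ℝ) :
    ∑ k ∈ Finset.range (n + 1),
        qp q ((q : ℂ) ^ (-(n : ℤ))) k * qp q (t₁ * Complex.exp (θ * Complex.I)) k *
          qp q (t₁ * Complex.exp (-(θ * Complex.I))) k * (q : ℂ) ^ k /
        (qp q q k * qp q (t₁ * t₂) k)
      = ((t₁ : ℂ) / t₂) ^ n *
        ∑ k ∈ Finset.range (n + 1),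
          qp q ((q : ℂ) ^ (-(n : ℤ))) k * qp q (t₂ * Complex.exp (θ * Complex.I)) k *
            qp q (t₂ * Complex.exp (-(θ * Complex.I))) k * (q : ℂ) ^ k /
          (qp q q k * qp q (t₁ * t₂) k) := by
  have hq₀ : (q : ℂ) ≠ 0 := ofReal_ne_zero.2 hq₁.ne'
  have hq : ‖(q : ℂ)‖ < 1 := by rwa [norm_real, Real.norm_of_nonneg hq₁.le]
  have ht₁₂ : ‖(t₁ : ℂ) * t₂‖ < 1 := by
    rw [norm_mul, norm_real, norm_real, Real.norm_eq_abs, Real.norm_eq_abs]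
    exact mul_lt_one_of_nonneg_of_lt_one_left (abs_nonneg t₁) (abs_lt.2 ht₁)
      (abs_lt.2 ht₂).le
  have h := ascPhi_symm hq₀ (mul_pow_ne_one_of_norm_lt_one hq hq.le) (exp_ne_zero (θ * I)) n
    t₁ t₂ (mul_pow_ne_one_of_norm_lt_one ht₁₂ hq.le)
  have ht₂ : (t₂ : ℂ) ≠ 0 := ofReal_ne_zero.2 (right_ne_zero_of_mul ht)
  simp only [ascPhi, phi32, phi32Term, ← exp_neg, mul_comm (t₂ : ℂ) t₁] at h
  rw [zpow_neg, zpow_natCast, div_pow, div_mul_eq_mul_div, eq_div_iff (pow_ne_zero n ht₂)]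
  linear_combination h
end
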